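/- arXiv:2311.17426 — 4 statements merged into one kernel-verified Lean document; each statement's English description precedes it below -/
import Mathlib

section
/- Let Γ be an infinite set, let G be a group of permutations of Γ, and let Y be the vector space c₀(Γ) endowed with an equivalent strictly convex norm. If the family F_{G,Γ} of finite orbits of the action of G on Γ is finite, then every G-invariant bounded linear operator from c₀(Γ) to Y attains its norm, i.e. L_G(c₀(Γ),Y) = NA_G(c₀(Γ),Y). -/
open scoped Cardinal

noncomputable section

universe u

/-- The homeomorphism of a discrete space induced by a permutation. -/
def permHomeo {Γ : Type u} [TopologicalSpace Γ] [DiscreteTopology Γ] (g : Equiv.Perm Γ) :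
    Γ ≃ₜ Γ :=
  { g with
    continuous_toFun := continuous_of_discreteTopology
    continuous_invFun := continuous_of_discreteTopology }

/-- The isometric action of a permutation `g` of `Γ` on `c₀(Γ)`, determined on the canonical
unit vectors by `g • e_γ = e_{g γ}` (so that `(g • x) γ = x (g⁻¹ γ)`). -/
def permC0 {𝕜 : Type u} [RCLike 𝕜] {Γ : Type u} [TopologicalSpace Γ] [DiscreteTopology Γ]
    (g : Equiv.Perm Γ) (x : ZeroAtInftyContinuousMap Γ 𝕜) : ZeroAtInftyContinuousMap Γ 𝕜 :=
  x.comp (permHomeo (g⁻¹ : Equiv.Perm Γ)).toCocompactMap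

/-- The orbit of `γ` under a group `G` of permutations of `Γ`. -/
def orbitOf {Γ : Type u} (G : Subgroup (Equiv.Perm Γ)) (γ : Γ) : Set Γ :=
  {δ : Γ | ∃ g ∈ G, g γ = δ}

/-- The set of orbits of the action of `G` on `Γ`. -/
def orbitsOf {Γ : Type u} (G : Subgroup (Equiv.Perm Γ)) : Set (Set Γ) :=
  Set.range (orbitOf G)

/-- `F_{G,Γ}^N` : the set of orbits of the action of `G` on `Γ` of cardinality at most `N`. -/
def FGN {Γ : Type u} (G : Subgroup (Equiv.Perm Γ)) (N : ℕ) : Set (Set Γ) :=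
  {S ∈ orbitsOf G | Cardinal.mk S ≤ (N : Cardinal)}

/-- `|G|_∞` : the supremum of the (infinite) cardinalities of the families `F_{G,Γ}^N`,
`N ∈ ℕ`, whenever one of them is infinite, and `0` otherwise. -/
def GInftyCard {Γ : Type u} (G : Subgroup (Equiv.Perm Γ)) : Cardinal :=
  sSup {c : Cardinal | ∃ N : ℕ, c = Cardinal.mk (FGN G N) ∧ Cardinal.aleph0 ≤ c}

/-- A bounded linear operator attains its norm. -/
def NormAttains {𝕜 : Type*} [RCLike 𝕜] {X Y : Type*} [SeminormedAddCommGroup X]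
    [SeminormedAddCommGroup Y] [NormedSpace 𝕜 X] [NormedSpace 𝕜 Y] (T : X →L[𝕜] Y) : Prop :=
  ∃ x : X, ‖x‖ = 1 ∧ ‖T x‖ = ‖T‖

/-- A set `M` in a topological vector space is `μ`-lineable if `M ∪ {0}` contains a vector
subspace of dimension `μ`. -/
def Lineable (𝕜 : Type*) {V : Type*} [NormedField 𝕜] [AddCommGroup V] [Module 𝕜 V]
    (M : Set V) (μ : Cardinal) : Prop :=
  ∃ W : Submodule 𝕜 V, Module.rank 𝕜 W = μ ∧ (W : Set V) ⊆ M ∪ {0}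

/-- A set `M` in a topological vector space is `μ`-spaceable if `M ∪ {0}` contains a closed
vector subspace of dimension `μ`. -/
def Spaceable (𝕜 : Type*) {V : Type*} [NormedField 𝕜] [AddCommGroup V] [Module 𝕜 V]
    [TopologicalSpace V] (M : Set V) (μ : Cardinal) : Prop :=
  ∃ W : Submodule 𝕜 V, IsClosed (W : Set V) ∧ Module.rank 𝕜 W = μ ∧ (W : Set V) ⊆ M ∪ {0}

/-- A set `M` in a topological vector space is `(α,β)`-spaceable if it is `α`-lineable and every
`α`-dimensional subspace of `M ∪ {0}` is contained in a closed `β`-dimensional subspace of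
`M ∪ {0}`. -/
def ABSpaceable (𝕜 : Type*) {V : Type*} [NormedField 𝕜] [AddCommGroup V] [Module 𝕜 V]
    [TopologicalSpace V] (M : Set V) (α β : Cardinal) : Prop :=
  Lineable 𝕜 M α ∧
    ∀ W : Submodule 𝕜 V, Module.rank 𝕜 W = α → (W : Set V) ⊆ M ∪ {0} →
      ∃ W' : Submodule 𝕜 V, IsClosed (W' : Set V) ∧ Module.rank 𝕜 W' = β ∧ W ≤ W' ∧
        (W' : Set V) ⊆ M ∪ {0}

/-!
A `G`-invariant operator `T` takes one and the same value on the unit vectors `e_δ` of an orbit,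
while the sum of `n` distinct unit vectors has norm one; hence `T e_γ = 0` whenever the orbit of
`γ` is infinite. So `T = T ∘ P`, where `P` is the contractive projection onto the finitely many
coordinates lying in finite orbits, and `T` attains its norm on the compact unit ball of the
finite-dimensional range of `P`. Adding a unit vector at a coordinate with infinite orbit brings
the norm of the maximiser to exactly one without changing its image under `T`.
-/

open Filter Topology ZeroAtInfty

namespace ZeroAtInftyContinuousMap

section Norm

variable {α E : Type*} [TopologicalSpace α] [SeminormedAddCommGroup E]

theorem norm_apply_le (f : C₀(α, E)) (x : α) : ‖f x‖ ≤ ‖f‖ := by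
  rw [← norm_toBCF_eq_norm]
  exact f.toBCF.norm_coe_le_norm x

protected theorem norm_le {f : C₀(α, E)} {C : ℝ} (hC : 0 ≤ C) : ‖f‖ ≤ C ↔ ∀ x, ‖f x‖ ≤ C := by
  rw [← norm_toBCF_eq_norm]
  exact BoundedContinuousFunction.norm_le hC

end Norm

theorem finset_sum_apply {α β ι : Type*} [TopologicalSpace α] [TopologicalSpace β]
    [AddCommMonoid β] [ContinuousAdd β] (s : Finset ι) (f : ι → C₀(α, β)) (x : α) :
    (∑ i ∈ s, f i) x = ∑ i ∈ s, f i x :=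
  map_sum ({ toFun := fun f : C₀(α, β) => f x, map_zero' := rfl, map_add' := fun _ _ => rfl } :
    C₀(α, β) →+ β) f s

variable {Γ : Type*} [TopologicalSpace Γ] [DiscreteTopology Γ]

section Indicator

variable {E : Type*} [NormedAddCommGroup E]

def finsetIndicator (s : Finset Γ) (f : Γ → E) : C₀(Γ, E) where
  toFun := (s : Set Γ).indicator f
  continuous_toFun := continuous_of_discreteTopology
  zero_at_infty' := by
    refine tendsto_const_nhds.congr' ?_
    filter_upwards [s.finite_toSet.isCompact.compl_mem_cocompact] with γ hγ
    exact (Set.indicator_of_notMem hγ f).symm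

@[simp]
theorem finsetIndicator_apply (s : Finset Γ) (f : Γ → E) (γ : Γ) :
    finsetIndicator s f γ = (s : Set Γ).indicator f γ :=
  rfl

theorem norm_finsetIndicator_le {s : Finset Γ} {f : Γ → E} {C : ℝ} (hC : 0 ≤ C)
    (hf : ∀ γ, ‖f γ‖ ≤ C) : ‖finsetIndicator s f‖ ≤ C :=
  (ZeroAtInftyContinuousMap.norm_le hC).2 fun γ => by
    by_cases hγ : γ ∈ s <;> simp [hγ, hC, hf]

theorem norm_finsetIndicator_le_norm (s : Finset Γ) (x : C₀(Γ, E)) :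
    ‖finsetIndicator s x‖ ≤ ‖x‖ :=
  norm_finsetIndicator_le (norm_nonneg x) (norm_apply_le x)

theorem tendsto_finsetIndicator (x : C₀(Γ, E)) :
    Tendsto (fun s : Finset Γ => finsetIndicator s x) atTop (𝓝 x) := by
  classical
  refine Metric.tendsto_atTop.2 fun ε hε => ?_
  have hsmall : ∀ᶠ γ in cocompact Γ, ‖x γ‖ < ε / 2 := by
    simpa using x.zero_at_infty'.norm.eventually (gt_mem_nhds (by simpa using half_pos hε))
  obtain ⟨K, hK, hKx⟩ := mem_cocompact.1 hsmall
  have hKfin := hK.finite_of_discrete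
  refine ⟨hKfin.toFinset, fun s hs => ?_⟩
  rw [dist_comm, dist_eq_norm]
  refine lt_of_le_of_lt ((ZeroAtInftyContinuousMap.norm_le (half_pos hε).le).2 fun γ => ?_)
    (half_lt_self hε)
  by_cases hγ : γ ∈ s
  · simp [hγ, (half_pos hε).le]
  · have hγK : γ ∉ K := fun h => hγ (hs (hKfin.mem_toFinset.2 h))
    simpa [hγ] using (hKx hγK).le

variable (𝕜 : Type*) [NormedField 𝕜] [NormedSpace 𝕜 E]

def restrictCLM (s : Finset Γ) : C₀(Γ, E) →L[𝕜] C₀(Γ, E) :=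
  LinearMap.mkContinuous
    { toFun := fun x => finsetIndicator s x
      map_add' := fun x y => by ext γ; simp [Set.indicator_add']
      map_smul' := fun c x => by ext γ; by_cases hγ : γ ∈ s <;> simp [hγ] } 1
    fun x => (one_mul ‖x‖).symm ▸ norm_finsetIndicator_le_norm s x

@[simp]
theorem restrictCLM_apply (s : Finset Γ) (x : C₀(Γ, E)) :
    restrictCLM 𝕜 s x = finsetIndicator s x :=
  rfl

theorem norm_restrictCLM_apply_le (s : Finset Γ) (x : C₀(Γ, E)) : ‖restrictCLM 𝕜 s x‖ ≤ ‖x‖ :=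
  norm_finsetIndicator_le_norm s x

end Indicator

section UnitVector

variable {𝕜 : Type*} [NormedField 𝕜]

def single (γ : Γ) : C₀(Γ, 𝕜) :=
  finsetIndicator {γ} 1

theorem single_apply [DecidableEq Γ] (γ δ : Γ) : single γ δ = if δ = γ then (1 : 𝕜) else 0 := by
  simp [single, Set.indicator_apply]

theorem finsetIndicator_eq_sum_smul_single (s : Finset Γ) (f : Γ → 𝕜) :
    finsetIndicator s f = ∑ γ ∈ s, f γ • single γ := by
  classical
  ext δ
  simp [finset_sum_apply, single_apply, Set.indicator_apply]

theorem norm_add_single_eq_one {x : C₀(Γ, 𝕜)} {γ : Γ} (hx : ‖x‖ ≤ 1) (hxγ : x γ = 0) :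
    ‖x + single γ‖ = 1 := by
  classical
  refine le_antisymm ((ZeroAtInftyContinuousMap.norm_le zero_le_one).2 fun δ => ?_) ?_
  · rcases eq_or_ne δ γ with rfl | hδ
    · simp [add_apply, single_apply, hxγ]
    · simpa [add_apply, single_apply, hδ] using (norm_apply_le x δ).trans hx
  · have := norm_apply_le (x + single γ) γ
    rwa [add_apply, hxγ, single_apply, if_pos rfl, zero_add, norm_one] at this

theorem restrictCLM_single_of_mem {s : Finset Γ} {γ : Γ} (hγ : γ ∈ s) :
    restrictCLM 𝕜 s (single γ) = (single γ : C₀(Γ, 𝕜)) := by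
  classical
  ext δ
  by_cases hδ : δ = γ <;> simp [single_apply, hδ, hγ]

theorem restrictCLM_single_of_notMem {s : Finset Γ} {γ : Γ} (hγ : γ ∉ s) :
    restrictCLM 𝕜 s (single γ) = (0 : C₀(Γ, 𝕜)) := by
  classical
  ext δ
  by_cases hδ : δ = γ <;> simp [single_apply, hδ, hγ]

variable {F : Type*} [NormedAddCommGroup F] [NormedSpace 𝕜 F]

theorem ext_single {S T : C₀(Γ, 𝕜) →L[𝕜] F} (h : ∀ γ, S (single γ) = T (single γ)) : S = T := by
  ext x
  have hST : ∀ s, S (finsetIndicator s x) = T (finsetIndicator s x) := by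
    simp [finsetIndicator_eq_sum_smul_single, h]
  have hS := (S.continuous.tendsto x).comp (tendsto_finsetIndicator x)
  have hT := (T.continuous.tendsto x).comp (tendsto_finsetIndicator x)
  exact tendsto_nhds_unique hS (by simpa [Function.comp_def, hST] using hT)

instance finiteDimensional_range_restrictCLM (s : Finset Γ) :
    FiniteDimensional 𝕜
      (LinearMap.range (restrictCLM (E := 𝕜) 𝕜 s : C₀(Γ, 𝕜) →ₗ[𝕜] C₀(Γ, 𝕜))) := by
  have hspan : LinearMap.range (restrictCLM (E := 𝕜) 𝕜 s : C₀(Γ, 𝕜) →ₗ[𝕜] C₀(Γ, 𝕜)) ≤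
      Submodule.span 𝕜 (single '' (s : Set Γ)) := by
    rintro _ ⟨x, rfl⟩
    rw [ContinuousLinearMap.coe_coe, restrictCLM_apply, finsetIndicator_eq_sum_smul_single]
    exact Submodule.sum_mem _ fun γ hγ =>
      Submodule.smul_mem _ _ (Submodule.subset_span ⟨γ, hγ, rfl⟩)
  have := FiniteDimensional.span_of_finite 𝕜 (s.finite_toSet.image (single (𝕜 := 𝕜)))
  exact Submodule.finiteDimensional_of_le hspan

end UnitVector

theorem eq_zero_of_forall_apply_single_eq {𝕜 Y : Type*} [RCLike 𝕜] [NormedAddCommGroup Y]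
    [NormedSpace 𝕜 Y] (T : C₀(Γ, 𝕜) →L[𝕜] Y) {S : Set Γ} (hS : S.Infinite) {v : Y}
    (hv : ∀ γ ∈ S, T (single γ) = v) : v = 0 := by
  have hbound : ∀ n : ℕ, n * ‖v‖ ≤ ‖T‖ := by
    intro n
    obtain ⟨s, hsS, rfl⟩ := hS.exists_subset_card_eq n
    have hTs : T (finsetIndicator s 1) = s.card • v := by
      simp [finsetIndicator_eq_sum_smul_single, Finset.sum_congr rfl fun γ hγ => hv γ (hsS hγ)]
    calc (s.card : ℝ) * ‖v‖ = ‖T (finsetIndicator s 1)‖ := by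
          rw [hTs, RCLike.norm_nsmul 𝕜, nsmul_eq_mul]
      _ ≤ ‖T‖ * 1 := T.le_opNorm_of_le (norm_finsetIndicator_le zero_le_one (by simp))
      _ = ‖T‖ := mul_one _
  by_contra hne
  have hpos : 0 < ‖v‖ := norm_pos_iff.2 hne
  obtain ⟨n, hn⟩ := exists_nat_gt (‖T‖ / ‖v‖)
  exact (hn.trans_le ((le_div_iff₀ hpos).2 (hbound n))).false

end ZeroAtInftyContinuousMap

theorem ContinuousLinearMap.exists_norm_apply_eq_opNorm_of_comp_eq {𝕜 X Y : Type*} [RCLike 𝕜]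
    [NormedAddCommGroup X] [NormedSpace 𝕜 X] [SeminormedAddCommGroup Y] [NormedSpace 𝕜 Y]
    {T : X →L[𝕜] Y} {P : X →L[𝕜] X} [FiniteDimensional 𝕜 (LinearMap.range (P : X →ₗ[𝕜] X))]
    (hP : ∀ x, ‖P x‖ ≤ ‖x‖) (hTP : T.comp P = T) :
    ∃ x ∈ LinearMap.range (P : X →ₗ[𝕜] X), ‖x‖ ≤ 1 ∧ ‖T x‖ = ‖T‖ := by
  have := FiniteDimensional.proper 𝕜 (LinearMap.range (P : X →ₗ[𝕜] X))
  obtain ⟨v, hv, hmax⟩ :=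
    (isCompact_closedBall (0 : LinearMap.range (P : X →ₗ[𝕜] X)) 1).exists_isMaxOn
      (Metric.nonempty_closedBall.2 zero_le_one)
      (T.continuous.comp continuous_subtype_val).norm.continuousOn
  have hv1 : ‖(v : X)‖ ≤ 1 := by simpa using hv
  refine ⟨v, v.2, hv1, le_antisymm ((T.le_opNorm_of_le hv1).trans_eq (mul_one _)) ?_⟩
  refine T.opNorm_le_of_unit_norm (norm_nonneg _) fun x hx => ?_
  have hPx : (⟨P x, LinearMap.mem_range_self _ x⟩ : LinearMap.range (P : X →ₗ[𝕜] X)) ∈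
      Metric.closedBall 0 1 := by
    simpa [← hx] using hP x
  calc ‖T x‖ = ‖T (P x)‖ := by rw [← ContinuousLinearMap.comp_apply, hTP]
    _ ≤ ‖T v‖ := hmax hPx

open ZeroAtInftyContinuousMap

theorem finite_setOf_finite_orbitOf {Γ : Type u} {G : Subgroup (Equiv.Perm Γ)}
    (hfin : {S ∈ orbitsOf G | S.Finite}.Finite) : {γ | (orbitOf G γ).Finite}.Finite :=
  (hfin.sUnion fun _ hS => hS.2).subset fun γ hγ =>
    ⟨orbitOf G γ, ⟨⟨γ, rfl⟩, hγ⟩, 1, G.one_mem, rfl⟩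

section Orbits

variable {𝕜 Γ : Type u} [RCLike 𝕜] [TopologicalSpace Γ] [DiscreteTopology Γ]

theorem permC0_single (g : Equiv.Perm Γ) (γ : Γ) :
    permC0 g (single γ) = (single (g γ) : C₀(Γ, 𝕜)) := by
  classical
  ext δ
  simp [permC0, permHomeo, single_apply, Equiv.symm_apply_eq]

theorem apply_single_eq_zero_of_infinite_orbitOf {Y : Type*} [NormedAddCommGroup Y]
    [NormedSpace 𝕜 Y] {G : Subgroup (Equiv.Perm Γ)} {T : C₀(Γ, 𝕜) →L[𝕜] Y}
    (hT : ∀ g ∈ G, ∀ x, T (permC0 g x) = T x) {γ : Γ} (hγ : (orbitOf G γ).Infinite) :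
    T (single γ) = 0 :=
  eq_zero_of_forall_apply_single_eq T hγ <| by
    rintro _ ⟨g, hg, rfl⟩
    rw [← permC0_single, hT g hg]

end Orbits

theorem finite_orbits_imp_all_norm_attaining_general
    {𝕜 : Type u} [RCLike 𝕜] {Γ : Type u} [TopologicalSpace Γ] [DiscreteTopology Γ] [Infinite Γ]
    {Y : Type u} [NormedAddCommGroup Y] [NormedSpace 𝕜 Y]
    (G : Subgroup (Equiv.Perm Γ))
    -- the family `F_{G,Γ}` of finite orbits is finite:
    (hfin : {S ∈ orbitsOf G | S.Finite}.Finite)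
    (T : ZeroAtInftyContinuousMap Γ 𝕜 →L[𝕜] Y)
    -- `T` is `G`-invariant:
    (hT : ∀ g ∈ G, ∀ x : ZeroAtInftyContinuousMap Γ 𝕜, T (permC0 g x) = T x) :
    NormAttains T := by
  set F := (finite_setOf_finite_orbitOf hfin).toFinset
  have hTF₀ : ∀ γ ∉ F, T (single γ) = 0 := fun γ hγ =>
    apply_single_eq_zero_of_infinite_orbitOf hT (by simpa [F] using hγ)
  have hTF : T.comp (restrictCLM 𝕜 F) = T := ext_single fun γ => by
    by_cases hγ : γ ∈ F
    · simp [restrictCLM_single_of_mem hγ]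
    · simp [restrictCLM_single_of_notMem hγ, hTF₀ γ hγ]
  obtain ⟨_, ⟨x, rfl⟩, hx, hTx⟩ :=
    T.exists_norm_apply_eq_opNorm_of_comp_eq (norm_restrictCLM_apply_le 𝕜 F) hTF
  obtain ⟨γ₀, hγ₀⟩ := Infinite.exists_notMem_finset F
  refine ⟨restrictCLM 𝕜 F x + single γ₀, norm_add_single_eq_one hx (by simp [hγ₀]), ?_⟩
  rw [map_add, hTF₀ γ₀ hγ₀, add_zero]
  exact hTx

/-- Let `Γ` be an infinite set, `G` a group of permutations of `Γ` and `Y` the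
space `c₀(Γ)` endowed with an equivalent strictly convex norm.  If the family of finite orbits of
the action of `G` on `Γ` is finite, then every `G`-invariant bounded linear operator from
`c₀(Γ)` to `Y` attains its norm. -/
theorem finite_orbits_imp_all_norm_attaining
    {𝕜 : Type u} [RCLike 𝕜] {Γ : Type u} [TopologicalSpace Γ] [DiscreteTopology Γ] [Infinite Γ]
    {Y : Type u} [NormedAddCommGroup Y] [NormedSpace 𝕜 Y] [CompleteSpace Y]
    -- `Y` is a renorming of `c₀(Γ)`:
    (equiv : ZeroAtInftyContinuousMap Γ 𝕜 ≃L[𝕜] Y)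
    -- `Y` is strictly convex:
    (hY : ∀ y₁ y₂ : Y, ‖y₁‖ = 1 → ‖y₂‖ = 1 → y₁ ≠ y₂ → ‖y₁ + y₂‖ < 2)
    (G : Subgroup (Equiv.Perm Γ))
    -- the family `F_{G,Γ}` of finite orbits is finite:
    (hfin : {S ∈ orbitsOf G | S.Finite}.Finite)
    (T : ZeroAtInftyContinuousMap Γ 𝕜 →L[𝕜] Y)
    -- `T` is `G`-invariant:
    (hT : ∀ g ∈ G, ∀ x : ZeroAtInftyContinuousMap Γ 𝕜, T (permC0 g x) = T x) :
    NormAttains T :=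
  finite_orbits_imp_all_norm_attaining_general G hfin T hT

end
end

section
/- Let Γ be an infinite set, let X be a closed subspace of c₀(Γ), and let Y be a strictly convex Banach space. If T : X → Y is a bounded linear operator that attains its norm, then there is a finite subset Γ₀ ⊆ Γ such that T(z) = 0 for every z ∈ X satisfying z(γ) = 0 for all γ ∈ Γ₀ (in particular, T depends only on finitely many coordinates). -/
open ZeroAtInftyContinuousMap Filter Topology


noncomputable section

/-- Let `Γ` be an infinite set, `X` a closed subspace of `c₀(Γ)` (encoded as a
linear isometric embedding `ι : X → c₀(Γ)` with closed range), and `Y` a strictly convex Banach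
space.  If `T : X → Y` is a bounded linear operator attaining its norm, then there is a finite
set `Γ₀ ⊆ Γ` such that `T z = 0` for every `z ∈ X` vanishing on `Γ₀`; in particular `T` depends
only on finitely many coordinates. -/
theorem normAttaining_depends_on_finitely_many_coordinates
    {𝕜 : Type*} [RCLike 𝕜] {Γ : Type*} [TopologicalSpace Γ] [DiscreteTopology Γ] [Infinite Γ]
    {X : Type*} [NormedAddCommGroup X] [NormedSpace 𝕜 X]
    (ι : X →ₗᵢ[𝕜] ZeroAtInftyContinuousMap Γ 𝕜)
    (hι : IsClosed (Set.range ι))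
    {Y : Type*} [NormedAddCommGroup Y] [NormedSpace 𝕜 Y] [CompleteSpace Y]
    -- `Y` is strictly convex:
    (hY : ∀ y₁ y₂ : Y, ‖y₁‖ = 1 → ‖y₂‖ = 1 → y₁ ≠ y₂ → ‖y₁ + y₂‖ < 2)
    (T : X →L[𝕜] Y) (hT : NormAttains T) :
    ∃ Γ₀ : Finset Γ, ∀ z : X, (∀ γ ∈ Γ₀, ι z γ = 0) → T z = 0 := by
  obtain ⟨x₀, hx₀, hTx₀⟩ := hT
  by_cases hT0 : T = 0
  · exact ⟨∅, fun z _ => by simp [hT0]⟩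
  have hTpos : 0 < ‖T‖ := norm_pos_iff.mpr hT0
  have htend : Tendsto (ι x₀) cofinite (nhds 0) := by
    rw [← cocompact_eq_cofinite Γ]
    exact zero_at_infty (ι x₀)
  have hfin : {γ : Γ | (1:ℝ)/2 ≤ ‖ι x₀ γ‖}.Finite := by
    have h := htend.eventually (Metric.ball_mem_nhds (0:𝕜) (by norm_num : (0:ℝ) < 1/2))
    rw [eventually_cofinite] at h
    refine h.subset fun γ hγ => ?_
    simp only [Set.mem_setOf_eq, Metric.mem_ball, dist_zero_right, not_lt] at *
    exact hγ
  refine ⟨hfin.toFinset, fun z hz => ?_⟩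
  have hsmall : ∀ γ : Γ, γ ∉ hfin.toFinset → ‖ι x₀ γ‖ < 1/2 := by
    intro γ hγ
    simpa [Set.Finite.mem_toFinset] using hγ
  set ε : ℝ := 1 / (2 * (‖z‖ + 1)) with hε
  have hzpos : 0 < ‖z‖ + 1 := by positivity
  have hεpos : 0 < ε := by positivity
  have hεz : ε * ‖z‖ ≤ 1/2 := by
    rw [hε, div_mul_eq_mul_div, one_mul, div_le_div_iff₀ (by positivity) (by norm_num)]
    nlinarith
  have hcoord : ∀ γ : Γ, ‖ι z γ‖ ≤ ‖z‖ := by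
    intro γ
    calc ‖ι z γ‖ = ‖(ι z).toBCF γ‖ := rfl
      _ ≤ ‖(ι z).toBCF‖ := BoundedContinuousFunction.norm_coe_le_norm _ γ
      _ = ‖z‖ := by rw [norm_toBCF_eq_norm, ι.norm_map]
  have hcoordx : ∀ γ : Γ, ‖ι x₀ γ‖ ≤ 1 := by
    intro γ
    calc ‖ι x₀ γ‖ = ‖(ι x₀).toBCF γ‖ := rfl
      _ ≤ ‖(ι x₀).toBCF‖ := BoundedContinuousFunction.norm_coe_le_norm _ γ
      _ = 1 := by rw [norm_toBCF_eq_norm, ι.norm_map, hx₀]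
  have hbound : ∀ s : 𝕜, ‖s‖ = ε → ‖x₀ + s • z‖ ≤ 1 := by
    intro s hs
    rw [← ι.norm_map, ← norm_toBCF_eq_norm]
    refine (BoundedContinuousFunction.norm_le zero_le_one).mpr fun γ => ?_
    have heval : (ι (x₀ + s • z)).toBCF γ = ι x₀ γ + s • ι z γ := by
      simp [map_add, map_smul]
    rw [heval]
    by_cases hγ : γ ∈ hfin.toFinset
    · rw [hz γ hγ]
      simpa using hcoordx γ
    · have h1 : ‖ι x₀ γ + s • ι z γ‖ ≤ ‖ι x₀ γ‖ + ‖s‖ * ‖ι z γ‖ := by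
        refine (norm_add_le _ _).trans ?_
        rw [norm_smul]
      have h2 : ‖s‖ * ‖ι z γ‖ ≤ ε * ‖z‖ := by
        rw [hs]; exact mul_le_mul_of_nonneg_left (hcoord γ) hεpos.le
      have h3 := (hsmall γ hγ).le
      linarith
  set s : 𝕜 := (ε : 𝕜) with hsdef
  have hsnorm : ‖s‖ = ε := by
    simp [hsdef, RCLike.norm_ofReal, abs_of_pos hεpos]
  have hu : ‖x₀ + s • z‖ ≤ 1 := hbound s hsnorm
  have hv : ‖x₀ + (-s) • z‖ ≤ 1 := hbound (-s) (by simpa using hsnorm)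
  have hTu : ‖T (x₀ + s • z)‖ ≤ ‖T‖ :=
    (T.le_opNorm _).trans (by nlinarith [T.le_opNorm (x₀ + s • z)])
  have hTv : ‖T (x₀ + (-s) • z)‖ ≤ ‖T‖ :=
    (T.le_opNorm _).trans (by nlinarith [T.le_opNorm (x₀ + (-s) • z)])
  have hxsum : (x₀ + s • z) + (x₀ + (-s) • z) = (2:𝕜) • x₀ := by module
  have hsum : T (x₀ + s • z) + T (x₀ + (-s) • z) = (2:𝕜) • T x₀ := by
    rw [← map_add, hxsum, map_smul]
  have hsumnorm : ‖T (x₀ + s • z) + T (x₀ + (-s) • z)‖ = 2 * ‖T‖ := by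
    rw [hsum, norm_smul, hTx₀]
    norm_num
  have htri : 2 * ‖T‖ ≤ ‖T (x₀ + s • z)‖ + ‖T (x₀ + (-s) • z)‖ := by
    rw [← hsumnorm]; exact norm_add_le _ _
  have hTu' : ‖T (x₀ + s • z)‖ = ‖T‖ := le_antisymm hTu (by linarith)
  have hTv' : ‖T (x₀ + (-s) • z)‖ = ‖T‖ := le_antisymm hTv (by linarith)
  set c : 𝕜 := ((‖T‖⁻¹ : ℝ) : 𝕜) with hcdef
  have hcnorm : ‖c‖ = ‖T‖⁻¹ := by
    simp [hcdef, RCLike.norm_ofReal, abs_of_pos (inv_pos.mpr hTpos)]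
  have hcne : c ≠ 0 := by
    simp [hcdef, RCLike.ofReal_eq_zero, hTpos.ne']
  have hn1 : ‖c • T (x₀ + s • z)‖ = 1 := by
    rw [norm_smul, hcnorm, hTu', inv_mul_cancel₀ hTpos.ne']
  have hn2 : ‖c • T (x₀ + (-s) • z)‖ = 1 := by
    rw [norm_smul, hcnorm, hTv', inv_mul_cancel₀ hTpos.ne']
  have hsum2 : ‖c • T (x₀ + s • z) + c • T (x₀ + (-s) • z)‖ = 2 := by
    rw [← smul_add, norm_smul, hcnorm, hsumnorm]
    field_simp
  have heq : c • T (x₀ + s • z) = c • T (x₀ + (-s) • z) := by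
    by_contra hne
    have := hY _ _ hn1 hn2 hne
    rw [hsum2] at this
    exact lt_irrefl _ this
  have heq2 : T (x₀ + s • z) = T (x₀ + (-s) • z) := smul_right_injective Y hcne heq
  rw [map_add, map_add, map_smul, map_smul] at heq2
  have h2 : s • T z = (-s) • T z := add_left_cancel heq2
  have h3 : (s - (-s)) • T z = 0 := by rw [sub_smul, h2, sub_self]
  have hsne : s - (-s) ≠ 0 := by
    rw [sub_neg_eq_add]
    intro hc
    have : s = 0 := add_self_eq_zero.mp hc
    rw [hsdef, RCLike.ofReal_eq_zero] at this
    exact hεpos.ne' this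
  exact (smul_eq_zero.mp h3).resolve_left hsne


end
end

section
/- Let X be a Banach space over 𝕂 ∈ {ℝ,ℂ}, let G ⊆ L(X) be a compact group of isometries (compact in the operator-norm topology), let Γ be an infinite set, let 1 ≤ q < ∞, and fix x₀ ∈ X with ‖x₀‖ = 1 that is G-invariant (g(x₀) = x₀ for all g ∈ G). Then the set NA_G^{x₀}(X, ℓ_q(Γ)) = {T ∈ L_G(X, ℓ_q(Γ)) : ‖T(x₀)‖ = ‖T‖} is |Γ|-lineable in L_G(X, ℓ_q(Γ)), i.e. its union with {0} contains a vector subspace of dimension |Γ|. -/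
open scoped Cardinal ENNReal NNReal

noncomputable section

universe u

/-!
Averaging a norming functional of `x₀` over the normalized Haar measure of `G` gives a
`G`-invariant functional `f` with `‖f‖ = f x₀ = 1`; this needs `G` to be a compact topological
group, and the inverse is continuous on `G` because `‖a⁻¹ - b⁻¹‖ = ‖a⁻¹ (b - a) b⁻¹‖ ≤ ‖a - b‖`
for contractions.  Then `v ↦ f.smulRight v` embeds `ℓ_q(Γ)` injectively into the `G`-invariant
operators, with `‖T x₀‖ = ‖v‖ = ‖T‖` for `T = f.smulRight v`; restrict it to the span of the
`|Γ|` linearly independent coordinate vectors.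
-/

open MeasureTheory ContinuousLinearMap

section ContractionGroup

variable {K R : Type*} [Group K] [NormedRing R]

theorem norm_map_inv_sub_map_inv_le (ρ : K →* R) (hρ_norm : ∀ k, ‖ρ k‖ ≤ 1) (a b : K) :
    ‖ρ a⁻¹ - ρ b⁻¹‖ ≤ ‖ρ a - ρ b‖ := by
  have h : ρ a⁻¹ - ρ b⁻¹ = ρ a⁻¹ * (ρ b - ρ a) * ρ b⁻¹ := by
    simp only [mul_sub, sub_mul, mul_assoc, ← map_mul, mul_inv_cancel, inv_mul_cancel_left,
      mul_one]
  calc ‖ρ a⁻¹ - ρ b⁻¹‖ ≤ ‖ρ a⁻¹‖ * ‖ρ b - ρ a‖ * ‖ρ b⁻¹‖ := h ▸ norm_mul₃_le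
    _ ≤ 1 * ‖ρ b - ρ a‖ * 1 := by gcongr <;> exact hρ_norm _
    _ = ‖ρ a - ρ b‖ := by rw [one_mul, mul_one, norm_sub_rev]

theorem IsTopologicalGroup.of_isEmbedding_of_norm_le_one [TopologicalSpace K] (ρ : K →* R)
    (hρ : Topology.IsEmbedding ρ) (hρ_norm : ∀ k, ‖ρ k‖ ≤ 1) : IsTopologicalGroup K where
  continuous_mul := hρ.continuous_iff.2 <| by
    simp only [Function.comp_def, map_mul]
    exact (hρ.continuous.comp continuous_fst).mul (hρ.continuous.comp continuous_snd)
  continuous_inv := hρ.continuous_iff.2 <| continuous_iff_continuousAt.2 fun b => by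
    have hρb := tendsto_iff_norm_sub_tendsto_zero.1 (hρ.continuous.tendsto b)
    exact tendsto_iff_norm_sub_tendsto_zero.2 <| squeeze_zero (fun _ => norm_nonneg _)
      (fun a => norm_map_inv_sub_map_inv_le ρ hρ_norm a b) hρb

end ContractionGroup

section InvariantFunctional

variable {𝕜 X : Type*} [RCLike 𝕜] [NormedAddCommGroup X] [NormedSpace 𝕜 X]

theorem exists_invariant_dual_vector {K : Type*} [Group K] [TopologicalSpace K]
    [IsTopologicalGroup K] [CompactSpace K] (ρ : K →* (X →L[𝕜] X)) (hρ : Continuous ρ)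
    (hρ_norm : ∀ k, ‖ρ k‖ ≤ 1) {x₀ : X} (hx₀ : x₀ ≠ 0) (hρx₀ : ∀ k, ρ k x₀ = x₀) :
    ∃ f : StrongDual 𝕜 X, ‖f‖ = 1 ∧ f x₀ = ‖x₀‖ ∧ ∀ k x, f (ρ k x) = f x := by
  borelize K
  obtain ⟨f₀, hf₀_norm, hf₀x₀⟩ := exists_dual_vector 𝕜 x₀ (norm_ne_zero_iff.2 hx₀)
  let μ := Measure.haarMeasure (⊤ : TopologicalSpace.PositiveCompacts K)
  have : IsProbabilityMeasure μ := ⟨by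
    rw [← TopologicalSpace.PositiveCompacts.coe_top]
    exact Measure.haarMeasure_self⟩
  let φ : K → StrongDual 𝕜 X := fun k => f₀ ∘L ρ k⁻¹
  have hφ : Integrable φ μ := (continuous_const.clm_comp (hρ.comp continuous_inv))
    |>.integrable_of_hasCompactSupport (.of_compactSpace _)
  have hφ_norm (k : K) : ‖φ k‖ ≤ 1 :=
    (opNorm_comp_le _ _).trans (by simpa [hf₀_norm] using hρ_norm k⁻¹)
  have hf_norm : ‖∫ k, φ k ∂μ‖ ≤ 1 := by
    simpa using norm_integral_le_of_norm_le_const (μ := μ) (.of_forall hφ_norm)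
  have hfx₀ : (∫ k, φ k ∂μ) x₀ = ‖x₀‖ := by
    simp [φ, integral_apply hφ, hρx₀, hf₀x₀]
  refine ⟨∫ k, φ k ∂μ, le_antisymm hf_norm ?_, hfx₀, fun h x => ?_⟩
  · have := (∫ k, φ k ∂μ).le_opNorm x₀
    rw [hfx₀, RCLike.norm_ofReal, abs_norm] at this
    exact (le_mul_iff_one_le_left (norm_pos_iff.2 hx₀)).1 this
  · have hφ_shift (k : K) : φ k (ρ h x) = φ (h⁻¹ * k) x := by simp [φ]
    simp only [integral_apply hφ, hφ_shift]
    exact integral_mul_left_eq_self (fun k => φ k x) h⁻¹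

theorem exists_invariant_dual_vector_of_isCompact (G : Set (X →L[𝕜] X))
    (hG_norm : ∀ g ∈ G, ‖g‖ ≤ 1) (hG_id : ContinuousLinearMap.id 𝕜 X ∈ G)
    (hG_comp : ∀ g ∈ G, ∀ h ∈ G, g.comp h ∈ G)
    (hG_inv : ∀ g ∈ G, ∃ h ∈ G, g.comp h = ContinuousLinearMap.id 𝕜 X ∧
      h.comp g = ContinuousLinearMap.id 𝕜 X)
    (hG_cpt : IsCompact G) {x₀ : X} (hx₀ : x₀ ≠ 0) (hx₀G : ∀ g ∈ G, g x₀ = x₀) :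
    ∃ f : StrongDual 𝕜 X, ‖f‖ = 1 ∧ f x₀ = ‖x₀‖ ∧ ∀ g ∈ G, ∀ x, f (g x) = f x := by
  let S : Submonoid (X →L[𝕜] X) :=
    { carrier := G, mul_mem' := fun ha hb => hG_comp _ ha _ hb, one_mem' := hG_id }
  let _ : Group S := groupOfIsUnit fun g => isUnit_iff_exists.2 <| by
    obtain ⟨h, hh, hgh, hhg⟩ := hG_inv g g.2
    exact ⟨⟨h, hh⟩, Subtype.ext hgh, Subtype.ext hhg⟩
  have : CompactSpace S := isCompact_iff_compactSpace.1 hG_cpt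
  have hS_norm (g : S) : ‖S.subtype g‖ ≤ 1 := hG_norm g g.2
  have := IsTopologicalGroup.of_isEmbedding_of_norm_le_one S.subtype
    Topology.IsEmbedding.subtypeVal hS_norm
  obtain ⟨f, hf_norm, hfx₀, hf⟩ := exists_invariant_dual_vector S.subtype continuous_subtype_val
    hS_norm hx₀ fun g => hx₀G g g.2
  exact ⟨f, hf_norm, hfx₀, fun g hg => hf ⟨g, hg⟩⟩

end InvariantFunctional

theorem lp.linearIndependent_single_one {𝕜 Γ : Type*} [NormedRing 𝕜] [DecidableEq Γ]
    (p : ℝ≥0∞) : LinearIndependent 𝕜 fun γ : Γ => lp.single p γ (1 : 𝕜) :=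
  LinearIndependent.of_comp
    { toFun := fun v : lp (fun _ : Γ => 𝕜) p => ⇑v
      map_add' := fun _ _ => rfl
      map_smul' := fun _ _ => rfl }
    (by
      convert Pi.linearIndependent_single_one Γ 𝕜 with γ
      exact lp.coeFn_single p γ 1)

theorem Lineable.of_injective {𝕜 : Type*} {V E : Type u} [NormedField 𝕜] [AddCommGroup V]
    [Module 𝕜 V] [AddCommGroup E] [Module 𝕜 E] {M : Set E} {L : V →ₗ[𝕜] E}
    (hL : Function.Injective L) (hLM : ∀ v, L v ∈ M) : Lineable 𝕜 M (Module.rank 𝕜 V) :=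
  ⟨LinearMap.range L, rank_range_of_injective L hL, by
    rintro _ ⟨v, rfl⟩
    exact Or.inl (hLM v)⟩

section SmulRight

variable {𝕜 X Y : Type*} [RCLike 𝕜] [NormedAddCommGroup X] [NormedSpace 𝕜 X]
  [NormedAddCommGroup Y] [NormedSpace 𝕜 Y] {f : StrongDual 𝕜 X} {x₀ : X}

theorem ContinuousLinearMap.smulRight_injective_of_apply_eq_one (hfx₀ : f x₀ = 1) :
    Function.Injective (f.smulRight : Y → X →L[𝕜] Y) :=
  Function.LeftInverse.injective (g := fun T => T x₀) fun v => by simp [hfx₀]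

theorem ContinuousLinearMap.norm_smulRight_apply_eq_norm (hf : ‖f‖ = 1) (hfx₀ : f x₀ = 1)
    (v : Y) : ‖f.smulRight v x₀‖ = ‖f.smulRight v‖ := by
  rw [smulRight_apply, hfx₀, one_smul, norm_smulRight_apply, hf, one_mul]

end SmulRight

theorem lineable_normAttainingAt_GInvariant_lq_general
    {𝕜 : Type u} [RCLike 𝕜]
    {X : Type u} [NormedAddCommGroup X] [NormedSpace 𝕜 X]
    (G : Set (X →L[𝕜] X))
    -- `G` consists of isometries:
    (hG_iso : ∀ g ∈ G, ∀ x : X, ‖g x‖ = ‖x‖)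
    -- `G` is a group under composition:
    (hG_id : ContinuousLinearMap.id 𝕜 X ∈ G)
    (hG_comp : ∀ g ∈ G, ∀ h ∈ G, g.comp h ∈ G)
    (hG_inv : ∀ g ∈ G, ∃ h ∈ G, g.comp h = ContinuousLinearMap.id 𝕜 X ∧
      h.comp g = ContinuousLinearMap.id 𝕜 X)
    -- `G` is compact in the operator-norm topology:
    (hG_cpt : IsCompact G)
    (Γ : Type u)
    (q : ℝ≥0∞) [Fact (1 ≤ q)]
    (x₀ : X) (hx₀ : ‖x₀‖ = 1) (hx₀G : ∀ g ∈ G, g x₀ = x₀) :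
    Lineable 𝕜
      {T : X →L[𝕜] lp (fun _ : Γ => 𝕜) q |
        (∀ g ∈ G, ∀ x : X, T (g x) = T x) ∧ ‖T x₀‖ = ‖T‖}
      (Cardinal.mk Γ) := by
  classical
  have hG_norm (g) (hg : g ∈ G) : ‖g‖ ≤ 1 :=
    opNorm_le_bound g zero_le_one fun x => by rw [hG_iso g hg x, one_mul]
  obtain ⟨f, hf_norm, hfx₀, hf_inv⟩ := exists_invariant_dual_vector_of_isCompact G hG_norm hG_id
    hG_comp hG_inv hG_cpt (norm_ne_zero_iff.1 (hx₀ ▸ one_ne_zero)) hx₀G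
  rw [hx₀, RCLike.ofReal_one] at hfx₀
  let L := (smulRightL 𝕜 X (lp (fun _ : Γ => 𝕜) q) f).toLinearMap ∘ₗ
    Finsupp.linearCombination 𝕜 fun γ : Γ => lp.single q γ (1 : 𝕜)
  have hL : Function.Injective L :=
    (smulRight_injective_of_apply_eq_one hfx₀).comp (lp.linearIndependent_single_one q)
  rw [← rank_finsupp_self' (R := 𝕜)]
  exact Lineable.of_injective hL fun v =>
    ⟨fun g hg x => by simp [L, hf_inv g hg x], norm_smulRight_apply_eq_norm hf_norm hfx₀ _⟩

/-- Let `X` be a Banach space, `G ⊆ L(X)` a compact group of isometries (in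
the operator-norm topology), `Γ` an infinite set, `1 ≤ q < ∞`, and `x₀ ∈ X` a `G`-invariant
point of norm one.  Then `NA_G^{x₀}(X, ℓ_q(Γ)) = {T ∈ L_G(X, ℓ_q(Γ)) : ‖T x₀‖ = ‖T‖}` is
`|Γ|`-lineable in `L_G(X, ℓ_q(Γ))`. -/
theorem lineable_normAttainingAt_GInvariant_lq
    {𝕜 : Type u} [RCLike 𝕜]
    {X : Type u} [NormedAddCommGroup X] [NormedSpace 𝕜 X] [CompleteSpace X]
    (G : Set (X →L[𝕜] X))
    -- `G` consists of isometries: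
    (hG_iso : ∀ g ∈ G, ∀ x : X, ‖g x‖ = ‖x‖)
    -- `G` is a group under composition:
    (hG_id : ContinuousLinearMap.id 𝕜 X ∈ G)
    (hG_comp : ∀ g ∈ G, ∀ h ∈ G, g.comp h ∈ G)
    (hG_inv : ∀ g ∈ G, ∃ h ∈ G, g.comp h = ContinuousLinearMap.id 𝕜 X ∧
      h.comp g = ContinuousLinearMap.id 𝕜 X)
    -- `G` is compact in the operator-norm topology:
    (hG_cpt : IsCompact G)
    (Γ : Type u) [Infinite Γ]
    (q : ℝ≥0∞) [Fact (1 ≤ q)] (hq : q ≠ ⊤)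
    (x₀ : X) (hx₀ : ‖x₀‖ = 1) (hx₀G : ∀ g ∈ G, g x₀ = x₀) :
    Lineable 𝕜
      {T : X →L[𝕜] lp (fun _ : Γ => 𝕜) q |
        (∀ g ∈ G, ∀ x : X, T (g x) = T x) ∧ ‖T x₀‖ = ‖T‖}
      (Cardinal.mk Γ) :=
  lineable_normAttainingAt_GInvariant_lq_general G hG_iso hG_id hG_comp hG_inv hG_cpt Γ q x₀ hx₀
    hx₀G
end
end

section
/- Let X be a Banach space over 𝕂 ∈ {ℝ,ℂ}, let G ⊆ L(X) be a compact group of isometries (compact in the operator-norm topology), and let Y be a closed G-invariant subspace of X (g(Y) = Y for all g ∈ G). Let X_G = {x ∈ X : g(x) = x for all g ∈ G} and Y_G = Y ∩ X_G. If the quotient X/Y is strictly convex and every continuous linear functional on X_G that vanishes on Y_G attains its norm, then Y_G is proximinal in X_G, i.e. for every x ∈ X_G there exists y ∈ Y_G with ‖x − y‖ = dist(x, Y_G). -/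
noncomputable section

/-- The subspace `X_G` of `G`-invariant points of `X`. -/
def fixedSubmodule {𝕜 : Type*} [RCLike 𝕜] {X : Type*} [NormedAddCommGroup X] [NormedSpace 𝕜 X]
    (G : Set (X →L[𝕜] X)) : Submodule 𝕜 X where
  carrier := {x | ∀ g ∈ G, g x = x}
  add_mem' := by
    intro a b ha hb g hg
    simp only [map_add, ha g hg, hb g hg]
  zero_mem' := by
    intro g hg
    simp
  smul_mem' := by
    intro c a ha g hg
    simp only [map_smul, ha g hg]

/-!
Averaging over the Haar probability measure of the compact group shows that a `G`-invariant point
is as close to `Y_G` as to `Y`. Hence `X_G ⧸ Y_G` embeds isometrically into `X ⧸ Y` and is strictly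
convex. Given `x ∉ Y_G` with `d = dist(x, Y_G)`, Hahn–Banach gives a norm-one functional on
`X_G ⧸ Y_G` taking the value `d` at the class of `x`; lifted to `X_G` it still has norm one and
vanishes on `Y_G`, so by hypothesis it takes the value `1` at a unit vector `z`. Strict convexity
forces the classes of `d⁻¹ • x` and `z` to coincide, so `x - d • z` is a nearest point of `Y_G`.
-/

open Metric MeasureTheory

theorem Metric.infDist_preimage_subtype_val {α : Type*} [PseudoMetricSpace α] {s t : Set α}
    (x : s) : infDist x (Subtype.val ⁻¹' t : Set s) = infDist (x : α) (t ∩ s) := by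
  rw [← infDist_image isometry_subtype_coe, Subtype.image_preimage_coe, Set.inter_comm]

theorem Submonoid.isCompact_units {R : Type*} [NormedRing R] [HasSummableGeomSeries R]
    (S : Submonoid R) (hS : IsCompact (S : Set R))
    (hS_inv : ∀ a ∈ S, ∃ b ∈ S, a * b = 1 ∧ b * a = 1) : IsCompact (S.units : Set Rˣ) := by
  have hunits : (S.units : Set Rˣ) = Units.val ⁻¹' S := by
    ext u
    refine ⟨fun hu => ((S.mem_units_iff u).mp hu).1, fun hu => (S.mem_units_iff u).mpr ⟨hu, ?_⟩⟩
    obtain ⟨b, hb, hub, -⟩ := hS_inv u hu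
    rwa [Units.inv_eq_of_mul_eq_one_right hub]
  rw [hunits]
  refine Units.isOpenEmbedding_val.isInducing.isCompact_preimage' hS fun a ha => ?_
  obtain ⟨b, -, hab, hba⟩ := hS_inv a ha
  exact ⟨⟨a, b, hab, hba⟩, rfl⟩

theorem norm_add_lt_two_of_norm_map_eq {E₁ E₂ 𝓕 : Type*} [NormedAddCommGroup E₁]
    [SeminormedAddCommGroup E₂] [FunLike 𝓕 E₁ E₂] [AddMonoidHomClass 𝓕 E₁ E₂] (T : 𝓕)
    (hT : ∀ u, ‖T u‖ = ‖u‖)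
    (hconv : ∀ u v : E₂, ‖u‖ = 1 → ‖v‖ = 1 → u ≠ v → ‖u + v‖ < 2) :
    ∀ u v : E₁, ‖u‖ = 1 → ‖v‖ = 1 → u ≠ v → ‖u + v‖ < 2 := by
  intro u v hu hv huv
  have hTuv : T u ≠ T v := fun h => huv <| by
    rw [← sub_eq_zero, ← norm_eq_zero, ← hT, map_sub, h, sub_self, norm_zero]
  rw [← hT, map_add]
  exact hconv (T u) (T v) ((hT u).trans hu) ((hT v).trans hv) hTuv

section NormedSpace

variable {𝕜 : Type*} [RCLike 𝕜] {E : Type*} [SeminormedAddCommGroup E] [NormedSpace 𝕜 E]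

theorem eq_of_apply_eq_one_of_strictConvex
    (hconv : ∀ u v : E, ‖u‖ = 1 → ‖v‖ = 1 → u ≠ v → ‖u + v‖ < 2)
    {g : E →L[𝕜] 𝕜} (hg : ‖g‖ ≤ 1) {u v : E} (hu : ‖u‖ ≤ 1) (hv : ‖v‖ ≤ 1)
    (hgu : g u = 1) (hgv : g v = 1) : u = v := by
  have norm_le : ∀ w, ‖g w‖ ≤ ‖w‖ := fun w => by simpa using g.le_of_opNorm_le hg w
  have hu1 : ‖u‖ = 1 := le_antisymm hu (by simpa [hgu] using norm_le u)
  have hv1 : ‖v‖ = 1 := le_antisymm hv (by simpa [hgv] using norm_le v)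
  by_contra hne
  have : ‖g (u + v)‖ = 2 := by rw [map_add, hgu, hgv]; norm_num
  linarith [hconv u v hu1 hv1 hne, norm_le (u + v)]

theorem exists_norm_eq_one_apply_eq_one {f : E →L[𝕜] 𝕜} {z : E} (hz : ‖z‖ = 1)
    (hfz : ‖f z‖ = 1) : ∃ z' : E, ‖z'‖ = 1 ∧ f z' = 1 := by
  refine ⟨(starRingEnd 𝕜) (f z) • z, ?_, ?_⟩
  · rw [norm_smul, RCLike.norm_conj, hfz, hz, one_mul]
  · rw [map_smul, smul_eq_mul, RCLike.conj_mul, hfz]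
    norm_num

theorem Submodule.Quotient.norm_mk_eq_infDist (W : Submodule 𝕜 E) (x : E) :
    ‖(Submodule.Quotient.mk x : E ⧸ W)‖ = infDist x W :=
  QuotientAddGroup.norm_mk x

theorem Submodule.opNorm_comp_mkQL {F : Type*} [SeminormedAddCommGroup F] [NormedSpace 𝕜 F]
    (W : Submodule 𝕜 E) (g : (E ⧸ W) →L[𝕜] F) : ‖g ∘L W.mkQL‖ = ‖g‖ := by
  refine le_antisymm ?_ (g.opNorm_le_bound (norm_nonneg _) fun q => ?_)
  · refine (g.opNorm_comp_le _).trans (mul_le_of_le_one_right (norm_nonneg _) ?_)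
    exact W.mkQL.opNorm_le_bound zero_le_one fun m => by
      simpa using Submodule.Quotient.norm_mk_le W m
  induction q using Submodule.Quotient.induction_on with | _ m => ?_
  rw [Submodule.Quotient.norm_mk_eq_infDist, infDist_eq_iInf,
    Real.mul_iInf_of_nonneg (norm_nonneg _)]
  have : Nonempty (W : Set E) := ⟨⟨0, W.zero_mem⟩⟩
  refine le_ciInf fun ⟨w, hw⟩ => ?_
  have hgm : g (Submodule.Quotient.mk m) = (g ∘L W.mkQL) (m - w) := by
    simp [(Submodule.Quotient.mk_eq_zero W).mpr hw]
  rw [hgm, dist_eq_norm]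
  exact (g ∘L W.mkQL).le_opNorm _

theorem Submodule.exists_norm_sub_eq_infDist_of_strictConvex {W : Submodule 𝕜 E}
    [IsClosed (W : Set E)]
    (hconv : ∀ u v : E ⧸ W, ‖u‖ = 1 → ‖v‖ = 1 → u ≠ v → ‖u + v‖ < 2)
    (hfun : ∀ f : E →L[𝕜] 𝕜, (∀ w ∈ W, f w = 0) → ∃ z : E, ‖z‖ = 1 ∧ ‖f z‖ = ‖f‖) (x : E) :
    ∃ w ∈ W, ‖x - w‖ = infDist x W := by
  set q : E ⧸ W := Submodule.Quotient.mk x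
  have hq : ‖q‖ = infDist x W := Submodule.Quotient.norm_mk_eq_infDist W x
  by_cases hxW : x ∈ W
  · exact ⟨x, hxW, by rw [sub_self, norm_zero, infDist_zero_of_mem hxW]⟩
  have hq0 : ‖q‖ ≠ 0 := by
    rwa [norm_ne_zero_iff, Ne, Submodule.Quotient.mk_eq_zero]
  obtain ⟨g, hg1, hgq⟩ := exists_dual_vector 𝕜 q hq0
  have hf1 : ‖g ∘L W.mkQL‖ = 1 := by rw [W.opNorm_comp_mkQL, hg1]
  obtain ⟨z₀, hz₀, hfz₀⟩ := hfun (g ∘L W.mkQL) fun w hw => by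
    simp [(Submodule.Quotient.mk_eq_zero W).mpr hw]
  obtain ⟨z, hz, hgz⟩ := exists_norm_eq_one_apply_eq_one hz₀ (hfz₀.trans hf1)
  have hd : (‖q‖ : 𝕜) ≠ 0 := by exact_mod_cast hq0
  have hqz : (‖q‖⁻¹ : 𝕜) • q = Submodule.Quotient.mk z := by
    refine eq_of_apply_eq_one_of_strictConvex hconv hg1.le ?_ ?_ ?_ hgz
    · rw [norm_smul, norm_inv, RCLike.norm_ofReal, abs_norm, inv_mul_cancel₀ hq0]
    · simpa [hz] using Submodule.Quotient.norm_mk_le W z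
    · rw [map_smul, hgq, smul_eq_mul, inv_mul_cancel₀ hd]
  refine ⟨x - (‖q‖ : 𝕜) • z, ?_, ?_⟩
  · rw [← Submodule.Quotient.mk_smul, Submodule.Quotient.eq] at hqz
    simpa [smul_sub, smul_smul, mul_inv_cancel₀ hd] using W.smul_mem (‖q‖ : 𝕜) hqz
  · rw [sub_sub_cancel, norm_smul, hz, mul_one, RCLike.norm_ofReal, abs_norm, hq]

end NormedSpace

section Averaging

variable {𝕜 : Type*} [RCLike 𝕜] {X : Type*} [NormedAddCommGroup X] [NormedSpace 𝕜 X]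
  [CompleteSpace X]

theorem exists_mem_fixed_norm_sub_le {K : Type*} [Group K] [TopologicalSpace K]
    [IsTopologicalGroup K] [CompactSpace K] (ρ : K →* (X →L[𝕜] X)) (hρ : Continuous ρ)
    (hρ_iso : ∀ k x, ‖ρ k x‖ = ‖x‖) {Y : Submodule 𝕜 X} (hY : IsClosed (Y : Set X))
    (hρY : ∀ k, ∀ y ∈ Y, ρ k y ∈ Y) {x : X} (hx : ∀ k, ρ k x = x) {y : X} (hy : y ∈ Y) :
    ∃ y' ∈ Y, (∀ k, ρ k y' = y') ∧ ‖x - y'‖ ≤ ‖x - y‖ := by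
  let _ : NormedSpace ℝ X := NormedSpace.restrictScalars ℝ 𝕜 X
  let _ : MeasurableSpace K := borel K
  have : BorelSpace K := ⟨rfl⟩
  let μ : Measure K := Measure.haarMeasure ⊤
  have : IsProbabilityMeasure μ := ⟨Measure.haarMeasure_self⟩
  have hint : ∀ v : X, Integrable (fun k => ρ k v) μ := fun v =>
    ((ContinuousLinearMap.apply 𝕜 X v).continuous.comp hρ).integrable_of_hasCompactSupport
      (.of_compactSpace _)
  refine ⟨∫ k, ρ k y ∂μ, ?_, fun h => ?_, ?_⟩
  · exact (Y.restrictScalars ℝ).convex.integral_mem hY (ae_of_all _ fun k => hρY k y hy) (hint y)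
  · rw [← (ρ h).integral_comp_comm (hint y)]
    simpa using integral_mul_left_eq_self (fun k => ρ k y) h
  · have hsub : x - ∫ k, ρ k y ∂μ = ∫ k, ρ k (x - y) ∂μ := by
      simp_rw [map_sub, hx]
      rw [integral_sub (integrable_const x) (hint y), integral_const, probReal_univ, one_smul]
    rw [hsub]
    simpa [hρ_iso] using norm_integral_le_of_norm_le_const (μ := μ) (C := ‖x - y‖)
      (ae_of_all _ fun k => (hρ_iso k (x - y)).le)

theorem infDist_inf_fixedSubmodule_eq (G : Set (X →L[𝕜] X))
    (hG_iso : ∀ g ∈ G, ∀ x : X, ‖g x‖ = ‖x‖)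
    (hG_id : ContinuousLinearMap.id 𝕜 X ∈ G)
    (hG_comp : ∀ g ∈ G, ∀ h ∈ G, g.comp h ∈ G)
    (hG_inv : ∀ g ∈ G, ∃ h ∈ G, g.comp h = ContinuousLinearMap.id 𝕜 X ∧
      h.comp g = ContinuousLinearMap.id 𝕜 X)
    (hG_cpt : IsCompact G) {Y : Submodule 𝕜 X} (hY : IsClosed (Y : Set X))
    (hY_inv : ∀ g ∈ G, ∀ y ∈ Y, g y ∈ Y) {x : X} (hx : x ∈ fixedSubmodule G) :
    infDist x (Y ⊓ fixedSubmodule G : Submodule 𝕜 X) = infDist x Y := by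
  let S : Submonoid (X →L[𝕜] X) :=
    { carrier := G, mul_mem' := fun ha hb => hG_comp _ ha _ hb, one_mem' := hG_id }
  have : CompactSpace S.units := isCompact_iff_compactSpace.mp (S.isCompact_units hG_cpt hG_inv)
  let ρ : S.units →* (X →L[𝕜] X) := (Units.coeHom _).comp S.units.subtype
  have hρG : ∀ k, ρ k ∈ G := fun k => ((S.mem_units_iff _).mp k.2).1
  have mem_fixed : ∀ v, (∀ k, ρ k v = v) → v ∈ fixedSubmodule G := by
    intro v hv g hg
    obtain ⟨h, hh, hgh, hhg⟩ := hG_inv g hg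
    exact hv ⟨⟨g, h, hgh, hhg⟩, (S.mem_units_iff _).mpr ⟨hg, hh⟩⟩
  refine le_antisymm (le_of_forall_gt fun c hc => ?_)
    (infDist_le_infDist_of_subset inf_le_left ⟨0, zero_mem _⟩)
  obtain ⟨y, hy, hxy⟩ := (infDist_lt_iff ⟨0, Y.zero_mem⟩).mp hc
  obtain ⟨y', hy', hy'_fixed, hxy'⟩ :=
    exists_mem_fixed_norm_sub_le ρ (Units.continuous_val.comp continuous_subtype_val)
      (fun k => hG_iso _ (hρG k)) hY (fun k => hY_inv _ (hρG k)) (fun k => hx _ (hρG k)) hy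
  calc infDist x (Y ⊓ fixedSubmodule G : Submodule 𝕜 X)
      ≤ dist x y' := infDist_le_dist_of_mem ⟨hy', mem_fixed y' hy'_fixed⟩
    _ ≤ dist x y := by simpa only [dist_eq_norm] using hxy'
    _ < c := hxy

end Averaging

/-- Let `X` be a Banach space, `G ⊆ L(X)` a compact group of isometries, and
`Y` a closed `G`-invariant subspace of `X`.  If the quotient `X/Y` is strictly convex and every
continuous linear functional on `X_G` vanishing on `Y_G = Y ∩ X_G` attains its norm, then `Y_G`
is proximinal in `X_G`. -/
theorem proximinal_of_quotient_strictConvex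
    {𝕜 : Type*} [RCLike 𝕜]
    {X : Type*} [NormedAddCommGroup X] [NormedSpace 𝕜 X] [CompleteSpace X]
    (G : Set (X →L[𝕜] X))
    -- `G` consists of isometries:
    (hG_iso : ∀ g ∈ G, ∀ x : X, ‖g x‖ = ‖x‖)
    -- `G` is a group under composition:
    (hG_id : ContinuousLinearMap.id 𝕜 X ∈ G)
    (hG_comp : ∀ g ∈ G, ∀ h ∈ G, g.comp h ∈ G)
    (hG_inv : ∀ g ∈ G, ∃ h ∈ G, g.comp h = ContinuousLinearMap.id 𝕜 X ∧
      h.comp g = ContinuousLinearMap.id 𝕜 X)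
    -- `G` is compact in the operator-norm topology:
    (hG_cpt : IsCompact G)
    -- `Y` is a closed `G`-invariant subspace:
    (Y : Submodule 𝕜 X) (hY_closed : IsClosed (Y : Set X))
    (hY_inv : ∀ g ∈ G, (g : X →L[𝕜] X) '' (Y : Set X) = (Y : Set X))
    -- the quotient `X/Y` is strictly convex:
    (hconv : ∀ u v : X ⧸ Y, ‖u‖ = 1 → ‖v‖ = 1 → u ≠ v → ‖u + v‖ < 2)
    -- every functional on `X_G` vanishing on `Y_G` attains its norm:
    (hfun : ∀ f : (fixedSubmodule G) →L[𝕜] 𝕜,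
      (∀ y : fixedSubmodule G, (y : X) ∈ Y → f y = 0) →
      ∃ x : fixedSubmodule G, ‖x‖ = 1 ∧ ‖f x‖ = ‖f‖) :
    -- `Y_G` is proximinal in `X_G`:
    ∀ x ∈ fixedSubmodule G, ∃ y ∈ Y ⊓ fixedSubmodule G,
      ‖x - y‖ = Metric.infDist x ((Y ⊓ fixedSubmodule G : Submodule 𝕜 X) : Set X) := by
  intro x hx
  set F := fixedSubmodule G
  set W : Submodule 𝕜 F := Y.comap F.subtype
  have : IsClosed (W : Set F) := hY_closed.preimage continuous_subtype_val
  have infDist_W : ∀ w : F, infDist w (W : Set F) = infDist (w : X) (Y ⊓ F : Submodule 𝕜 X) :=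
    fun w => infDist_preimage_subtype_val (s := (F : Set X)) (t := Y) w
  have infDist_Y : ∀ w : F, infDist (w : X) (Y ⊓ F : Submodule 𝕜 X) = infDist (w : X) Y :=
    fun w => infDist_inf_fixedSubmodule_eq G hG_iso hG_id hG_comp hG_inv hG_cpt hY_closed
      (fun g hg y hy => (hY_inv g hg).subset ⟨y, hy, rfl⟩) w.2
  have norm_mapQ : ∀ q : F ⧸ W, ‖W.mapQ Y F.subtype le_rfl q‖ = ‖q‖ := by
    intro q
    induction q using Submodule.Quotient.induction_on with | _ w => ?_
    rw [Submodule.mapQ_apply, Submodule.Quotient.norm_mk_eq_infDist,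
      Submodule.Quotient.norm_mk_eq_infDist, infDist_W, infDist_Y]
    rfl
  obtain ⟨w, hwW, hw⟩ := W.exists_norm_sub_eq_infDist_of_strictConvex
    (norm_add_lt_two_of_norm_map_eq (W.mapQ Y F.subtype le_rfl) norm_mapQ hconv) hfun ⟨x, hx⟩
  exact ⟨w, ⟨hwW, w.2⟩, hw.trans (infDist_W _)⟩

end
end
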